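/- Let k ≥ 2 be an integer. If r₀ ∈ ℝ \ {0} satisfies p(r₀) = 0, then r₀⁻ < r₀ < r₀⁺, where r₀^± = ( k(k+2) ± √(k(k+2)(2k+1)) ) / ((k+1)(k+2)); in particular r₀ > 0. -/

import Mathlib

open Real MeasureTheory Set intervalIntegral Filter

noncomputable def Wfn (k : ℕ) (r t : ℝ) : ℝ :=
  (t * (t + r ^ 2) / (1 - t)) ^ ((1 : ℝ) / ((k : ℝ) + 1))

noncomputable def a₀ (k : ℕ) (r : ℝ) : ℝ :=
  -((k : ℝ) + 1) * ((k : ℝ) + 2) * r ^ 2 + 2 * (k : ℝ) * ((k : ℝ) + 2) * r - (k : ℝ) * ((k : ℝ) - 1)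

noncomputable def a₁ (k : ℕ) : ℝ := 2 * (2 * (k : ℝ) + 1)

noncomputable def periodP (k : ℕ) (r : ℝ) : ℝ :=
  |r| ^ (-(2 * (k : ℝ)) / ((k : ℝ) + 1)) *
    ∫ t in (0 : ℝ)..1, (a₀ k r - a₁ k * t) / Wfn k r t

lemma Wfn_pos (k : ℕ) (r t : ℝ) (hr : r ≠ 0) (ht : 0 < t) (ht1 : t < 1) : 0 < Wfn k r t := by
  apply Real.rpow_pos_of_pos
  have h1 : 0 < t + r ^ 2 := by positivity
  have h2 : 0 < 1 - t := by linarith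
  positivity

lemma a₁_pos (k : ℕ) : 0 < a₁ k := by unfold a₁; positivity

lemma integrable_f (k : ℕ) (hk : 2 ≤ k) (r : ℝ) (hr : r ≠ 0) :
    IntervalIntegrable (fun t => (a₀ k r - a₁ k * t) / Wfn k r t) volume 0 1 := by
  set c : ℝ := (1 : ℝ) / ((k : ℝ) + 1) with hc_def
  have hkr : (2:ℝ) ≤ (k:ℝ) := by exact_mod_cast hk
  have hc0 : 0 < c := by positivity
  have hc1 : c < 1 := by
    rw [hc_def, div_lt_one (by linarith)]; linarith
  have hr2 : (0:ℝ) < r ^ 2 := by positivity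
  have hg : IntervalIntegrable
      (fun t : ℝ => (|a₀ k r| + a₁ k) * ((r ^ 2) ^ (-c) * t ^ (-c))) volume 0 1 := by
    have := (intervalIntegrable_rpow' (a := (0:ℝ)) (b := 1) (r := -c) (by linarith)).const_mul
      ((r ^ 2) ^ (-c))
    simpa [mul_assoc] using this.const_mul (|a₀ k r| + a₁ k)
  rw [intervalIntegrable_iff_integrableOn_Ioc_of_le zero_le_one] at hg ⊢
  have hm : Measurable fun t : ℝ => (a₀ k r - a₁ k * t) / Wfn k r t := by
    unfold Wfn
    exact (measurable_const.sub (measurable_const.mul measurable_id)).div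
      ((Real.continuous_rpow_const hc0.le).measurable.comp
        ((measurable_id.mul (measurable_id.add measurable_const)).div
          (measurable_const.sub measurable_id)))
  refine MeasureTheory.Integrable.mono hg hm.aestronglyMeasurable ?_
  rw [ae_restrict_iff' measurableSet_Ioc]
  filter_upwards with t ht
  have ht0 : 0 < t := ht.1
  have hgt : 0 ≤ (|a₀ k r| + a₁ k) * ((r ^ 2) ^ (-c) * t ^ (-c)) := by
    have := (a₁_pos k).le
    have := abs_nonneg (a₀ k r)
    positivity
  rcases eq_or_lt_of_le ht.2 with h1 | h1
  · subst h1
    have : Wfn k r 1 = 0 := by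
      unfold Wfn
      norm_num
      exact Real.zero_rpow (by positivity)
    rw [this, div_zero, norm_zero]
    exact norm_nonneg _
  · have hW := Wfn_pos k r t hr ht0 h1
    have hbase : t * r ^ 2 ≤ t * (t + r ^ 2) / (1 - t) := by
      rw [le_div_iff₀ (by linarith)]
      nlinarith [sq_nonneg t, sq_nonneg (t * r)]
    have hWlb : (t * r ^ 2) ^ c ≤ Wfn k r t := by
      unfold Wfn
      exact Real.rpow_le_rpow (by positivity) hbase hc0.le
    have hWlb0 : (0:ℝ) < (t * r ^ 2) ^ c := Real.rpow_pos_of_pos (by positivity) _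
    have hinv : (Wfn k r t)⁻¹ ≤ (r ^ 2) ^ (-c) * t ^ (-c) := by
      have h2 : (Wfn k r t)⁻¹ ≤ ((t * r ^ 2) ^ c)⁻¹ := by
        exact inv_anti₀ hWlb0 hWlb
      calc (Wfn k r t)⁻¹ ≤ ((t * r ^ 2) ^ c)⁻¹ := h2
        _ = (t * r ^ 2) ^ (-c) := (Real.rpow_neg (by positivity) c).symm
        _ = t ^ (-c) * (r ^ 2) ^ (-c) := Real.mul_rpow ht0.le hr2.le
        _ = (r ^ 2) ^ (-c) * t ^ (-c) := mul_comm _ _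
    have hnum : |a₀ k r - a₁ k * t| ≤ |a₀ k r| + a₁ k := by
      refine (abs_sub _ _).trans ?_
      have : |a₁ k * t| ≤ a₁ k := by
        rw [abs_mul, abs_of_nonneg (a₁_pos k).le, abs_of_nonneg ht0.le]
        nlinarith [a₁_pos k]
      linarith
    rw [Real.norm_eq_abs, Real.norm_eq_abs, abs_of_nonneg hgt, abs_div,
      abs_of_pos hW, div_eq_mul_inv]
    exact mul_le_mul hnum hinv (inv_nonneg.mpr hW.le)
      (by nlinarith [a₁_pos k, abs_nonneg (a₀ k r)])

lemma integral_neg_of_a₀_nonpos (k : ℕ) (hk : 2 ≤ k) (r : ℝ) (hr : r ≠ 0) (ha : a₀ k r ≤ 0) :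
    ∫ t in (0:ℝ)..1, (a₀ k r - a₁ k * t) / Wfn k r t < 0 := by
  have hi := integrable_f k hk r hr
  have hpos : 0 < ∫ t in (0:ℝ)..1, -((a₀ k r - a₁ k * t) / Wfn k r t) := by
    refine intervalIntegral_pos_of_pos_on hi.neg ?_ zero_lt_one
    intro t ht
    have hW := Wfn_pos k r t hr ht.1 ht.2
    have h1 : 0 < a₁ k * t := mul_pos (a₁_pos k) ht.1
    have hnum : a₀ k r - a₁ k * t < 0 := by linarith
    simpa using div_neg_of_neg_of_pos hnum hW
  rw [intervalIntegral.integral_neg] at hpos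
  linarith

theorem period_zero_located (k : ℕ) (hk : 2 ≤ k) (r₀ : ℝ) (hr : r₀ ≠ 0)
    (hp : periodP k r₀ = 0) :
    ((k : ℝ) * ((k : ℝ) + 2) - Real.sqrt ((k : ℝ) * ((k : ℝ) + 2) * (2 * (k : ℝ) + 1))) /
        (((k : ℝ) + 1) * ((k : ℝ) + 2)) < r₀ ∧
    r₀ < ((k : ℝ) * ((k : ℝ) + 2) + Real.sqrt ((k : ℝ) * ((k : ℝ) + 2) * (2 * (k : ℝ) + 1))) /
        (((k : ℝ) + 1) * ((k : ℝ) + 2)) ∧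
    0 < r₀ := by
  have hkr : (2:ℝ) ≤ (k:ℝ) := by exact_mod_cast hk
  set s := Real.sqrt ((k : ℝ) * ((k : ℝ) + 2) * (2 * (k : ℝ) + 1)) with hs_def
  have hsnn : 0 ≤ s := Real.sqrt_nonneg _
  have hs2 : s ^ 2 = (k:ℝ) * ((k:ℝ) + 2) * (2 * (k:ℝ) + 1) := Real.sq_sqrt (by positivity)
  have hA : (0:ℝ) < ((k:ℝ) + 1) * ((k:ℝ) + 2) := by positivity
  have key : 0 < a₀ k r₀ := by
    by_contra h
    push_neg at h
    have hint := integral_neg_of_a₀_nonpos k hk r₀ hr h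
    have hpre : 0 < |r₀| ^ (-(2 * (k:ℝ)) / ((k:ℝ) + 1)) :=
      Real.rpow_pos_of_pos (abs_pos.mpr hr) _
    unfold periodP at hp
    nlinarith [mul_neg_of_pos_of_neg hpre hint]
  -- s < k(k+2)
  have hslt : s < (k:ℝ) * ((k:ℝ) + 2) := by
    rw [hs_def, Real.sqrt_lt' (by positivity)]
    nlinarith [hkr]
  have hkey : a₀ k r₀ = (s ^ 2 - (((k:ℝ)+1)*((k:ℝ)+2)*r₀ - (k:ℝ)*((k:ℝ)+2)) ^ 2) /
      (((k:ℝ)+1)*((k:ℝ)+2)) := by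
    field_simp [a₀]
    simp only [a₀]; nlinarith [hs2]
  have hX : (((k:ℝ)+1)*((k:ℝ)+2)*r₀ - (k:ℝ)*((k:ℝ)+2)) ^ 2 < s ^ 2 := by
    rw [hkey, lt_div_iff₀ hA, zero_mul] at key
    linarith
  have h1 : ((k : ℝ) * ((k : ℝ) + 2) - s) / (((k : ℝ) + 1) * ((k : ℝ) + 2)) < r₀ := by
    rw [div_lt_iff₀ hA]
    nlinarith [sq_nonneg (s + (((k:ℝ)+1)*((k:ℝ)+2)*r₀ - (k:ℝ)*((k:ℝ)+2)))]
  refine ⟨h1, ?_, ?_⟩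
  · rw [lt_div_iff₀ hA]
    nlinarith [sq_nonneg (s - (((k:ℝ)+1)*((k:ℝ)+2)*r₀ - (k:ℝ)*((k:ℝ)+2)))]
  · have : 0 < ((k : ℝ) * ((k : ℝ) + 2) - s) / (((k : ℝ) + 1) * ((k : ℝ) + 2)) :=
      div_pos (by linarith) hA
    linarith
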